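/- Let U ⊆ ℝ^N be open, α a smooth 1-form on U, Z a smooth vector field on U with dα(x)(Z(x), v) = 0 for all x ∈ U, v ∈ ℝ^N, β a closed smooth 1-form on U, f : U → ℝ smooth, and ζ a smooth vector field with L_ζ(α + β) = df. Then the Lie bracket [ζ, Z] lies in the kernel of dα at every point: dα(x)([ζ,Z](x), v) = 0 for all x ∈ U and all v ∈ ℝ^N. -/

import Mathlib

noncomputable section
open scoped ContDiff

/-- The Lie derivative of a 1-form `α` on `ℝ^N` along a vector field `ζ`:
`(L_ζ α)(x)(v) = (Dα(x)(ζ(x)))(v) + α(x)(Dζ(x)(v))`. -/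
def lieDerivV {N : ℕ} (ζ : (Fin N → ℝ) → (Fin N → ℝ))
    (α : (Fin N → ℝ) → ((Fin N → ℝ) →L[ℝ] ℝ)) (x : Fin N → ℝ) :
    (Fin N → ℝ) →L[ℝ] ℝ :=
  fderiv ℝ α x (ζ x) + (α x).comp (fderiv ℝ ζ x)

/-- The exterior derivative of a 1-form on `ℝ^N`:
`dα(x)(u,v) = (Dα(x)u)(v) − (Dα(x)v)(u)`. -/
def extDerivV {N : ℕ} (α : (Fin N → ℝ) → ((Fin N → ℝ) →L[ℝ] ℝ)) (x u v : Fin N → ℝ) : ℝ :=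
  fderiv ℝ α x u v - fderiv ℝ α x v u

/-- The Lie bracket of vector fields on `ℝ^N`: `[X,Y](x) = DY(x)(X(x)) − DX(x)(Y(x))`. -/
def vbracketV {N : ℕ} (X Y : (Fin N → ℝ) → (Fin N → ℝ)) (x : Fin N → ℝ) : Fin N → ℝ :=
  fderiv ℝ Y x (X x) - fderiv ℝ X x (Y x)

/-! Since `β` is closed, `γ := α + β` has `dγ = dα`, so it suffices to treat the single form `γ`
with `L_ζ γ = df`. Then `i_{[ζ,Z]} dγ = L_ζ (i_Z dγ) - i_Z (L_ζ dγ)`: the first term vanishes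
because `i_Z dγ = 0` near each point, the second because Cartan's formula gives
`L_ζ dγ = d (L_ζ γ) = d d f = 0`. -/

open Filter Topology

section Smoothness

variable {E F : Type*} [NormedAddCommGroup E] [NormedSpace ℝ E] [NormedAddCommGroup F]
  [NormedSpace ℝ F] {g : E → F} {x : E}

lemma ContDiffOn.contDiffAt_two {U : Set E} (hg : ContDiffOn ℝ ∞ g U) (hU : U ∈ 𝓝 x) :
    ContDiffAt ℝ 2 g x :=
  (hg.contDiffAt hU).of_le (WithTop.coe_le_coe.2 le_top)

lemma ContDiffAt.differentiableAt_fderiv_of_two (hg : ContDiffAt ℝ 2 g x) :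
    DifferentiableAt ℝ (fderiv ℝ g) x :=
  (hg.fderiv_right (m := 1) le_rfl).differentiableAt one_ne_zero

end Smoothness

section ExteriorCalculus

variable {N : ℕ} {γ γ' : (Fin N → ℝ) → ((Fin N → ℝ) →L[ℝ] ℝ)} {x : Fin N → ℝ}

lemma extDerivV_sub_left (u u' v : Fin N → ℝ) :
    extDerivV γ x (u - u') v = extDerivV γ x u v - extDerivV γ x u' v := by
  simp only [extDerivV, map_sub, sub_apply]
  ring

lemma extDerivV_add (hγ : DifferentiableAt ℝ γ x) (hγ' : DifferentiableAt ℝ γ' x)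
    (u v : Fin N → ℝ) :
    extDerivV (fun y => γ y + γ' y) x u v = extDerivV γ x u v + extDerivV γ' x u v := by
  simp only [extDerivV, fderiv_fun_add hγ hγ', add_apply]
  ring

lemma Filter.EventuallyEq.extDerivV_eq (h : γ =ᶠ[𝓝 x] γ') : extDerivV γ x = extDerivV γ' x := by
  unfold extDerivV
  rw [h.fderiv_eq]

lemma extDerivV_fderiv {f : (Fin N → ℝ) → ℝ} (hf : ContDiffAt ℝ 2 f x) (u v : Fin N → ℝ) :
    extDerivV (fderiv ℝ f) x u v = 0 := by
  rw [extDerivV, hf.isSymmSndFDerivAt (by simp [minSmoothness_of_isRCLikeNormedField]) u v,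
    sub_self]

lemma fderiv_extDerivV_const (hγ : DifferentiableAt ℝ (fderiv ℝ γ) x) (u v s : Fin N → ℝ) :
    fderiv ℝ (fun y => extDerivV γ y u v) x s =
      fderiv ℝ (fderiv ℝ γ) x s u v - fderiv ℝ (fderiv ℝ γ) x s v u := by
  have hB := hγ.hasFDerivAt
  have h := ((hB.clm_apply (hasFDerivAt_const u x)).clm_apply (hasFDerivAt_const v x)).fun_sub
    ((hB.clm_apply (hasFDerivAt_const v x)).clm_apply (hasFDerivAt_const u x))
  unfold extDerivV
  rw [h.fderiv]
  simp only [ContinuousLinearMap.comp_zero, zero_add, sub_apply, ContinuousLinearMap.flip_apply]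

lemma fderiv_extDerivV_apply_left {X : (Fin N → ℝ) → (Fin N → ℝ)}
    (hγ : DifferentiableAt ℝ (fderiv ℝ γ) x) (hX : DifferentiableAt ℝ X x) (v s : Fin N → ℝ) :
    fderiv ℝ (fun y => extDerivV γ y (X y) v) x s =
      fderiv ℝ (fun y => extDerivV γ y (X x) v) x s + extDerivV γ x (fderiv ℝ X x s) v := by
  have hB := hγ.hasFDerivAt
  have h := ((hB.clm_apply hX.hasFDerivAt).clm_apply (hasFDerivAt_const v x)).fun_sub
    ((hB.clm_apply (hasFDerivAt_const v x)).clm_apply hX.hasFDerivAt)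
  rw [fderiv_extDerivV_const hγ]
  unfold extDerivV
  rw [h.fderiv]
  simp only [ContinuousLinearMap.comp_zero, ContinuousLinearMap.flip_add, add_apply, zero_add,
    sub_apply, ContinuousLinearMap.flip_apply, ContinuousLinearMap.comp_apply]
  ring

lemma extDerivV_lieDerivV {ζ : (Fin N → ℝ) → (Fin N → ℝ)} (hγ : ContDiffAt ℝ 2 γ x)
    (hζ : ContDiffAt ℝ 2 ζ x) (u v : Fin N → ℝ) :
    extDerivV (lieDerivV ζ γ) x u v =
      fderiv ℝ (fun y => extDerivV γ y u v) x (ζ x) +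
        extDerivV γ x (fderiv ℝ ζ x u) v + extDerivV γ x u (fderiv ℝ ζ x v) := by
  have hsymm : minSmoothness ℝ 2 ≤ 2 := by simp [minSmoothness_of_isRCLikeNormedField]
  have sγ := hγ.isSymmSndFDerivAt hsymm
  have sζ := hζ.isSymmSndFDerivAt hsymm
  have hγ' := hγ.differentiableAt_fderiv_of_two
  have h := (hγ'.hasFDerivAt.clm_apply (hζ.differentiableAt two_ne_zero).hasFDerivAt).fun_add
    ((hγ.differentiableAt two_ne_zero).hasFDerivAt.clm_comp
      hζ.differentiableAt_fderiv_of_two.hasFDerivAt)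
  rw [fderiv_extDerivV_const hγ']
  unfold extDerivV lieDerivV
  rw [h.fderiv]
  simp only [add_apply, ContinuousLinearMap.comp_apply, ContinuousLinearMap.flip_apply,
    ContinuousLinearMap.compL_apply]
  linear_combination (DFunLike.congr_fun (sγ u (ζ x)) v) - (DFunLike.congr_fun (sγ v (ζ x)) u)
    + congrArg (γ x) (sζ u v)

end ExteriorCalculus

lemma extDerivV_vbracketV_eq_zero {N : ℕ} {γ : (Fin N → ℝ) → ((Fin N → ℝ) →L[ℝ] ℝ)}
    {Z ζ : (Fin N → ℝ) → (Fin N → ℝ)} {f : (Fin N → ℝ) → ℝ} {x : Fin N → ℝ}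
    (hγ : ContDiffAt ℝ 2 γ x) (hZ : DifferentiableAt ℝ Z x) (hζ : ContDiffAt ℝ 2 ζ x)
    (hf : ContDiffAt ℝ 2 f x) (hZker : ∀ᶠ y in 𝓝 x, ∀ v, extDerivV γ y (Z y) v = 0)
    (hsym : lieDerivV ζ γ =ᶠ[𝓝 x] fderiv ℝ f) (v : Fin N → ℝ) :
    extDerivV γ x (vbracketV ζ Z x) v = 0 := by
  have hiZ : fderiv ℝ (fun y => extDerivV γ y (Z y) v) x (ζ x) = 0 := by
    have h : (fun y => extDerivV γ y (Z y) v) =ᶠ[𝓝 x] fun _ => 0 := hZker.mono fun y hy => hy v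
    rw [h.fderiv_eq, fderiv_const_apply, zero_apply]
  have hcartan : extDerivV (lieDerivV ζ γ) x (Z x) v = 0 := by
    rw [hsym.extDerivV_eq]
    exact extDerivV_fderiv hf _ _
  rw [fderiv_extDerivV_apply_left hγ.differentiableAt_fderiv_of_two hZ] at hiZ
  rw [extDerivV_lieDerivV hγ hζ, hZker.self_of_nhds, add_zero] at hcartan
  rw [vbracketV, extDerivV_sub_left]
  linarith

theorem bracket_in_kernel_char_bundle {N : ℕ}
    (U : Set (Fin N → ℝ)) (hU : IsOpen U)
    (α β : (Fin N → ℝ) → ((Fin N → ℝ) →L[ℝ] ℝ))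
    (Z ζ : (Fin N → ℝ) → (Fin N → ℝ)) (f : (Fin N → ℝ) → ℝ)
    (hα : ContDiffOn ℝ ∞ α U) (hβ : ContDiffOn ℝ ∞ β U)
    (hZ : ContDiffOn ℝ ∞ Z U) (hζ : ContDiffOn ℝ ∞ ζ U) (hf : ContDiffOn ℝ ∞ f U)
    (hZker : ∀ x ∈ U, ∀ v, extDerivV α x (Z x) v = 0)
    (hβclosed : ∀ x ∈ U, ∀ u v, extDerivV β x u v = 0)
    (hsym : ∀ x ∈ U, lieDerivV ζ (fun y => α y + β y) x = fderiv ℝ f x) :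
    ∀ x ∈ U, ∀ v, extDerivV α x (vbracketV ζ Z x) v = 0 := by
  have hclosed_add : ∀ y ∈ U, ∀ u w, extDerivV (fun z => α z + β z) y u w = extDerivV α y u w := by
    intro y hy u w
    have hUy := hU.mem_nhds hy
    rw [extDerivV_add ((hα.contDiffAt_two hUy).differentiableAt two_ne_zero)
      ((hβ.contDiffAt_two hUy).differentiableAt two_ne_zero), hβclosed y hy, add_zero]
  intro x hx v
  have hUx := hU.mem_nhds hx
  rw [← hclosed_add x hx]
  refine extDerivV_vbracketV_eq_zero ((hα.add hβ).contDiffAt_two hUx)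
    ((hZ.contDiffAt_two hUx).differentiableAt two_ne_zero) (hζ.contDiffAt_two hUx)
    (hf.contDiffAt_two hUx) ?_ (eventually_of_mem hUx hsym) v
  filter_upwards [hUx] with y hy w
  rw [hclosed_add y hy]
  exact hZker y hy w
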